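/- arXiv:2112.00254 — 6 statements merged into one kernel-verified Lean document; each statement's English description precedes it below -/
import Mathlib

section
/- With Q and M as defined, the matrix M is invertible and Q·M⁻¹ equals the block matrix H, i.e., Q·M⁻¹ = [[r·Iₙ + ((1−α)/s)·AᵀA, Aᵀ], [A, s·Iₘ]]. -/
/-! M is block lower unitriangular, so M⁻¹ only flips the sign of its off-diagonal block.
Right multiplication by M⁻¹ then adds ((1 - α)/s) times the second block column of Q, applied
to A, to the first one; the lower-left block becomes (α + s · (1 - α)/s) • A = A. -/

open Matrix

section LowerUnitriangular

variable {k l m n R : Type*} [Fintype m] [Fintype n] [DecidableEq m] [DecidableEq n]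

theorem Matrix.inv_fromBlocks_one_zero_one [CommRing R] (C : Matrix n m R) :
    (fromBlocks 1 0 C 1 : Matrix (m ⊕ n) (m ⊕ n) R)⁻¹ = fromBlocks 1 0 (-C) 1 := by
  rw [inv_fromBlocks_zero₁₂_of_isUnit_iff 1 C 1 (iff_of_true isUnit_one isUnit_one)]
  simp only [inv_one, Matrix.one_mul, Matrix.mul_one]

theorem Matrix.fromBlocks_mul_fromBlocks_one_zero_one [Semiring R]
    (P : Matrix l m R) (B : Matrix l n R) (C : Matrix k m R) (D : Matrix k n R)
    (K : Matrix n m R) :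
    fromBlocks P B C D * (fromBlocks 1 0 K 1 : Matrix (m ⊕ n) (m ⊕ n) R) =
      fromBlocks (P + B * K) B (C + D * K) D := by
  simp only [fromBlocks_multiply, Matrix.mul_one, Matrix.mul_zero, zero_add]

end LowerUnitriangular

theorem stmt_0_general (n m : ℕ)
    (A : Matrix (Fin m) (Fin n) ℝ) (r s α : ℝ) (hs : 0 < s)
    (Q M H : Matrix (Fin n ⊕ Fin m) (Fin n ⊕ Fin m) ℝ)
    (hQ : Q = Matrix.fromBlocks (r • 1) Aᵀ (α • A) (s • 1))
    (hM : M = Matrix.fromBlocks 1 0 (-(((1 - α) / s) • A)) 1)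
    (hH : H = Matrix.fromBlocks (r • 1 + ((1 - α) / s) • (Aᵀ * A)) Aᵀ A (s • 1)) :
    IsUnit M ∧ Q * M⁻¹ = H := by
  have hMinv : M⁻¹ = fromBlocks 1 0 (((1 - α) / s) • A) 1 := by
    rw [hM, inv_fromBlocks_one_zero_one, neg_neg]
  refine ⟨hM ▸ isUnit_fromBlocks_zero₁₂.mpr ⟨isUnit_one, isUnit_one⟩, ?_⟩
  rw [hMinv, hQ, hH, fromBlocks_mul_fromBlocks_one_zero_one]
  have hlower : α • A + (s • 1 : Matrix (Fin m) (Fin m) ℝ) * (((1 - α) / s) • A) = A := by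
    rw [Matrix.smul_mul, Matrix.one_mul, smul_smul, mul_div_cancel₀ _ hs.ne', ← add_smul,
      add_sub_cancel, one_smul]
  rw [Matrix.mul_smul, hlower]

theorem stmt_0 (n m : ℕ) (hn : 0 < n) (hm : 0 < m)
    (A : Matrix (Fin m) (Fin n) ℝ) (r s α : ℝ) (hr : 0 < r) (hs : 0 < s)
    (Q M H : Matrix (Fin n ⊕ Fin m) (Fin n ⊕ Fin m) ℝ)
    (hQ : Q = Matrix.fromBlocks (r • 1) Aᵀ (α • A) (s • 1))
    (hM : M = Matrix.fromBlocks 1 0 (-(((1 - α) / s) • A)) 1)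
    (hH : H = Matrix.fromBlocks (r • 1 + ((1 - α) / s) • (Aᵀ * A)) Aᵀ A (s • 1)) :
    IsUnit M ∧ Q * M⁻¹ = H :=
  stmt_0_general n m A r s α hs Q M H hQ hM hH
end

section
/- With Q and M as defined, Qᵀ + Q − MᵀQ equals the block matrix G, i.e., Qᵀ + Q − MᵀQ = [[r·Iₙ + (α(1−α)/s)·AᵀA, Aᵀ], [A, s·Iₘ]]; since Q = (Q·M⁻¹)·M, this is exactly Qᵀ + Q − Mᵀ(Q·M⁻¹)M. -/
open Matrix

variable {ι κ R : Type*} [Fintype ι] [Fintype κ] [DecidableEq ι] [DecidableEq κ] [CommRing R]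

lemma fromBlocks_transpose_add_sub_shear_transpose_mul (A : Matrix κ ι R) (r s α c : R)
    (hc : c * s = 1 - α) :
    (fromBlocks (r • 1) Aᵀ (α • A) (s • 1))ᵀ + fromBlocks (r • 1) Aᵀ (α • A) (s • 1)
      - (fromBlocks 1 0 (-(c • A)) 1)ᵀ * fromBlocks (r • 1) Aᵀ (α • A) (s • 1)
      = fromBlocks (r • 1 + (α * c) • (Aᵀ * A)) Aᵀ A (s • 1) := by
  rw [sub_eq_iff_eq_add']
  simp only [fromBlocks_transpose, fromBlocks_multiply, fromBlocks_add, fromBlocks_inj,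
    transpose_smul, transpose_one, transpose_neg, transpose_zero, transpose_transpose,
    Matrix.one_mul, Matrix.zero_mul, Matrix.neg_mul, Matrix.smul_mul, Matrix.mul_smul,
    Matrix.mul_one, smul_neg, smul_smul, zero_add, smul_zero]
  refine ⟨by abel, ?_, add_comm _ _, trivial⟩
  rw [mul_comm s c, hc, sub_smul, one_smul]
  abel

lemma isUnit_det_fromBlocks_one_zero_one (C : Matrix κ ι R) :
    IsUnit (fromBlocks (1 : Matrix ι ι R) 0 C 1).det := by
  simp

theorem stmt_1_general (n m : ℕ)
    (A : Matrix (Fin m) (Fin n) ℝ) (r s α : ℝ) (hs : 0 < s)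
    (Q M G : Matrix (Fin n ⊕ Fin m) (Fin n ⊕ Fin m) ℝ)
    (hQ : Q = Matrix.fromBlocks (r • 1) Aᵀ (α • A) (s • 1))
    (hM : M = Matrix.fromBlocks 1 0 (-(((1 - α) / s) • A)) 1)
    (hG : G = Matrix.fromBlocks (r • 1 + ((α * (1 - α)) / s) • (Aᵀ * A)) Aᵀ A (s • 1)) :
    Qᵀ + Q - Mᵀ * Q = G ∧ Qᵀ + Q - Mᵀ * (Q * M⁻¹) * M = G := by
  have hMQ : Qᵀ + Q - Mᵀ * Q = G := by
    rw [hQ, hM, hG, fromBlocks_transpose_add_sub_shear_transpose_mul A r s α _ (div_mul_cancel₀ _ hs.ne'),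
      mul_div_assoc]
  have hQM : Q * M⁻¹ * M = Q :=
    nonsing_inv_mul_cancel_right M Q (hM ▸ isUnit_det_fromBlocks_one_zero_one _)
  refine ⟨hMQ, ?_⟩
  rwa [Matrix.mul_assoc Mᵀ, Matrix.mul_assoc, ← Matrix.mul_assoc Q, hQM]

theorem stmt_1 (n m : ℕ) (hn : 0 < n) (hm : 0 < m)
    (A : Matrix (Fin m) (Fin n) ℝ) (r s α : ℝ) (hr : 0 < r) (hs : 0 < s)
    (Q M G : Matrix (Fin n ⊕ Fin m) (Fin n ⊕ Fin m) ℝ)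
    (hQ : Q = Matrix.fromBlocks (r • 1) Aᵀ (α • A) (s • 1))
    (hM : M = Matrix.fromBlocks 1 0 (-(((1 - α) / s) • A)) 1)
    (hG : G = Matrix.fromBlocks (r • 1 + ((α * (1 - α)) / s) • (Aᵀ * A)) Aᵀ A (s • 1)) :
    Qᵀ + Q - Mᵀ * Q = G ∧ Qᵀ + Q - Mᵀ * (Q * M⁻¹) * M = G :=
  stmt_1_general n m A r s α hs Q M G hQ hM hG
end

section
/- Let C be the (n+m)×(n+m) block matrix C = [[Iₙ, 0], [−(1/s)·A, Iₘ]]. Then CᵀHC = [[r·Iₙ − (α/s)·AᵀA, 0], [0, s·Iₘ]] and CᵀGC = [[r·Iₙ − ((1−α+α²)/s)·AᵀA, 0], [0, s·Iₘ]]. -/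
/-! Congruence by the lower unitriangular matrix `C` performs block Gaussian elimination
against the invertible block `s • 1`: it clears both off-diagonal blocks and replaces the
upper-left block by its Schur complement, which subtracts `(1 / s) • Aᵀ * A`. -/

open Matrix

theorem fromBlocks_congr_eq_schur {K l o : Type*} [Field K] [Fintype l] [Fintype o]
    [DecidableEq l] [DecidableEq o] (P : Matrix l l K) (B : Matrix o l K) {s : K} (hs : s ≠ 0) :
    (fromBlocks 1 0 (-((1 / s) • B)) 1)ᵀ * fromBlocks P Bᵀ B (s • 1) *
        fromBlocks 1 0 (-((1 / s) • B)) 1 =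
      fromBlocks (P - (1 / s) • (Bᵀ * B)) 0 0 (s • 1) := by
  simp only [fromBlocks_transpose, fromBlocks_multiply, transpose_one, transpose_zero,
    transpose_neg, transpose_smul]
  congr 1 <;> simp [smul_smul, hs, sub_eq_add_neg]

theorem add_smul_sub_smul_eq_sub_smul {K M : Type*} [Field K] [AddCommGroup M] [Module K M]
    (Y X : M) {a b c : K} (h : a - b = -c) : Y + a • X - b • X = Y - c • X := by
  rw [add_sub_assoc, ← sub_smul, h, neg_smul, ← sub_eq_add_neg]

theorem stmt_2_general (n m : ℕ)
    (A : Matrix (Fin m) (Fin n) ℝ) (r s α : ℝ) (hs : 0 < s)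
    (H G C : Matrix (Fin n ⊕ Fin m) (Fin n ⊕ Fin m) ℝ)
    (hH : H = Matrix.fromBlocks (r • 1 + ((1 - α) / s) • (Aᵀ * A)) Aᵀ A (s • 1))
    (hG : G = Matrix.fromBlocks (r • 1 + ((α * (1 - α)) / s) • (Aᵀ * A)) Aᵀ A (s • 1))
    (hC : C = Matrix.fromBlocks 1 0 (-((1 / s) • A)) 1) :
    Cᵀ * H * C = Matrix.fromBlocks (r • 1 - (α / s) • (Aᵀ * A)) 0 0 (s • 1) ∧
    Cᵀ * G * C =
      Matrix.fromBlocks (r • 1 - ((1 - α + α ^ 2) / s) • (Aᵀ * A)) 0 0 (s • 1) := by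
  subst hH hG hC
  rw [fromBlocks_congr_eq_schur _ _ hs.ne', fromBlocks_congr_eq_schur _ _ hs.ne']
  constructor <;> congr 1 <;> apply add_smul_sub_smul_eq_sub_smul <;> field_simp <;> ring

theorem stmt_2 (n m : ℕ) (hn : 0 < n) (hm : 0 < m)
    (A : Matrix (Fin m) (Fin n) ℝ) (r s α : ℝ) (hr : 0 < r) (hs : 0 < s)
    (H G C : Matrix (Fin n ⊕ Fin m) (Fin n ⊕ Fin m) ℝ)
    (hH : H = Matrix.fromBlocks (r • 1 + ((1 - α) / s) • (Aᵀ * A)) Aᵀ A (s • 1))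
    (hG : G = Matrix.fromBlocks (r • 1 + ((α * (1 - α)) / s) • (Aᵀ * A)) Aᵀ A (s • 1))
    (hC : C = Matrix.fromBlocks 1 0 (-((1 / s) • A)) 1) :
    Cᵀ * H * C = Matrix.fromBlocks (r • 1 - (α / s) • (Aᵀ * A)) 0 0 (s • 1) ∧
    Cᵀ * G * C =
      Matrix.fromBlocks (r • 1 - ((1 - α + α ^ 2) / s) • (Aᵀ * A)) 0 0 (s • 1) :=
  stmt_2_general n m A r s α hs H G C hH hG hC
end

section
/- The symmetric block matrix G = [[r·Iₙ + (α(1−α)/s)·AᵀA, Aᵀ], [A, s·Iₘ]] is positive definite if and only if the n×n matrix r·s·Iₙ − (1−α+α²)·AᵀA is positive definite. -/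
/-!
Take the Schur complement of the positive definite corner `s • 1`: `G` is positive definite iff
`r • 1 + (α (1 - α) / s) • AᵀA - AᵀA / s` is, and this matrix equals
`s⁻¹ • ((r s) • 1 - (1 - α + α²) • AᵀA)`.
-/

open Matrix

namespace Matrix

theorem posDef_smul_iff {K n : Type*} [Field K] [LinearOrder K] [StarRing K] [StarOrderedRing K]
    {M : Matrix n n K} {c : K} (hc : 0 < c) : (c • M).PosDef ↔ M.PosDef :=
  ⟨fun h => by simpa [hc.ne'] using h.smul (inv_pos.2 hc), fun h => h.smul hc⟩

variable {m n R : Type*} [Fintype m] [Fintype n]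
  [CommRing R] [PartialOrder R] [StarRing R] [StarOrderedRing R]

theorem posDef_fromBlocks_zero_zero_iff {A : Matrix m m R} {D : Matrix n n R} :
    (fromBlocks A 0 0 D).PosDef ↔ A.PosDef ∧ D.PosDef := by
  refine ⟨fun h => ⟨h.submatrix Sum.inl_injective, h.submatrix Sum.inr_injective⟩,
    fun ⟨hA, hD⟩ => ?_⟩
  refine .of_dotProduct_mulVec_pos (isHermitian_fromBlocks_iff.mpr ⟨hA.1, by simp, by simp, hD.1⟩)
    fun z hz => ?_
  obtain ⟨x, y, rfl⟩ : ∃ x y, z = Sum.elim x y := ⟨_, _, (Sum.elim_comp_inl_inr z).symm⟩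
  rw [fromBlocks_mulVec, Function.star_sumElim, Sum.elim_comp_inl, Sum.elim_comp_inr,
    sumElim_dotProduct_sumElim]
  simp only [zero_mulVec, add_zero, zero_add]
  by_cases hx : x = 0
  · have hy : y ≠ 0 := by rintro rfl; simp [hx] at hz
    subst hx
    simpa using hD.dotProduct_mulVec_pos hy
  · exact add_pos_of_pos_of_nonneg (hA.dotProduct_mulVec_pos hx)
      (hD.posSemidef.dotProduct_mulVec_nonneg _)

/-- The LDU factorization `fromBlocks_eq_of_invertible₂₂` is a congruence with the block-diagonal
matrix `fromBlocks (A - B * D⁻¹ * Bᴴ) 0 0 D`. -/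
theorem posDef_fromBlocks₂₂_iff [DecidableEq m] [DecidableEq n] (A : Matrix m m R)
    (B : Matrix m n R) {D : Matrix n n R} (hD : D.PosDef) [Invertible D] :
    (fromBlocks A B Bᴴ D).PosDef ↔ (A - B * D⁻¹ * Bᴴ).PosDef := by
  have hL : IsUnit (fromBlocks 1 0 (⅟D * Bᴴ) 1 : Matrix (m ⊕ n) (m ⊕ n) R) := by simp
  have hstar : star (fromBlocks 1 0 (⅟D * Bᴴ) 1 : Matrix (m ⊕ n) (m ⊕ n) R) =
      fromBlocks 1 (B * ⅟D) 0 1 := by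
    simp [star_eq_conjTranspose, fromBlocks_conjTranspose, conjTranspose_nonsing_inv, hD.1.eq]
  rw [fromBlocks_eq_of_invertible₂₂, ← hstar, hL.posDef_star_left_conjugate_iff,
    posDef_fromBlocks_zero_zero_iff, invOf_eq_nonsing_inv]
  exact and_iff_left hD

end Matrix

theorem stmt_4_general (n m : ℕ)
    (A : Matrix (Fin m) (Fin n) ℝ) (r s α : ℝ) (hs : 0 < s)
    (G : Matrix (Fin n ⊕ Fin m) (Fin n ⊕ Fin m) ℝ)
    (hG : G = Matrix.fromBlocks (r • 1 + ((α * (1 - α)) / s) • (Aᵀ * A)) Aᵀ A (s • 1)) :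
    G.PosDef ↔
      ((r * s) • (1 : Matrix (Fin n) (Fin n) ℝ) - (1 - α + α ^ 2) • (Aᵀ * A)).PosDef := by
  have hD : (s • 1 : Matrix (Fin m) (Fin m) ℝ).PosDef := PosDef.one.smul hs
  let := hD.isUnit.invertible
  have hDinv : (s • 1 : Matrix (Fin m) (Fin m) ℝ)⁻¹ = s⁻¹ • 1 :=
    inv_eq_left_inv (by simp [smul_smul, hs.ne'])
  have hschur :
      r • 1 + (α * (1 - α) / s) • (Aᵀ * A) - Aᵀ * (s • 1 : Matrix (Fin m) (Fin m) ℝ)⁻¹ * A =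
      s⁻¹ • ((r * s) • (1 : Matrix (Fin n) (Fin n) ℝ) - (1 - α + α ^ 2) • (Aᵀ * A)) := by
    rw [hDinv, Matrix.mul_smul, Matrix.mul_one, Matrix.smul_mul]
    match_scalars <;> field_simp; ring
  have hG' := posDef_fromBlocks₂₂_iff (r • 1 + (α * (1 - α) / s) • (Aᵀ * A)) Aᵀ hD
  rw [conjTranspose_eq_transpose_of_trivial, transpose_transpose] at hG'
  rw [hG, hG', hschur, posDef_smul_iff (inv_pos.2 hs)]

theorem stmt_4 (n m : ℕ) (hn : 0 < n) (hm : 0 < m)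
    (A : Matrix (Fin m) (Fin n) ℝ) (r s α : ℝ) (hr : 0 < r) (hs : 0 < s)
    (G : Matrix (Fin n ⊕ Fin m) (Fin n ⊕ Fin m) ℝ)
    (hG : G = Matrix.fromBlocks (r • 1 + ((α * (1 - α)) / s) • (Aᵀ * A)) Aᵀ A (s • 1)) :
    G.PosDef ↔
      ((r * s) • (1 : Matrix (Fin n) (Fin n) ℝ) - (1 - α + α ^ 2) • (Aᵀ * A)).PosDef :=
  stmt_4_general n m A r s α hs G hG
end

section
/- (Proposition 1) If r·s > (1−α+α²)·λmax(AᵀA), where λmax(AᵀA) denotes the largest eigenvalue of the positive semidefinite matrix AᵀA, then both block matrices H = [[r·Iₙ + ((1−α)/s)·AᵀA, Aᵀ], [A, s·Iₘ]] and G = [[r·Iₙ + (α(1−α)/s)·AᵀA, Aᵀ], [A, s·Iₘ]] are positive definite. -/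
/-!
By the Schur complement with respect to the invertible block `s • 1`, a matrix
`fromBlocks P Aᵀ A (s • 1)` is positive definite as soon as `P - s⁻¹ • AᵀA` is. For `H` and `G`
these complements are `r • 1 - (α / s) • AᵀA` and `r • 1 - ((1 - α + α²) / s) • AᵀA`. Since
`AᵀA ≤ λmax • 1` and `α λmax ≤ (1 - α + α²) λmax` (the difference is `(1 - α)² λmax ≥ 0`), both
are positive definite when `r s > (1 - α + α²) λmax`.
-/

open Matrix
open scoped ComplexOrder

namespace Matrix

variable {m n 𝕜 : Type*} [DecidableEq n] [RCLike 𝕜]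

open scoped MatrixOrder in
theorem IsHermitian.posSemidef_smul_one_sub_of_eigenvalues_le [Fintype n] {M : Matrix n n 𝕜}
    (hM : M.IsHermitian) {L : ℝ} (hL : ∀ i, hM.eigenvalues i ≤ L) :
    (L • 1 - M).PosSemidef := by
  have : M ≤ algebraMap ℝ (Matrix n n 𝕜) L := le_algebraMap_of_spectrum_le fun x hx => by
    obtain ⟨i, rfl⟩ := hM.spectrum_real_eq_range_eigenvalues ▸ hx
    exact hL i
  rw [Algebra.algebraMap_eq_smul_one] at this
  exact this

theorem PosSemidef.posDef_smul_one_sub_smul {M : Matrix n n 𝕜} (hM : M.PosSemidef)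
    {L r c : ℝ} (hML : (L • 1 - M).PosSemidef) (hr : 0 < r) (hcL : c * L < r) :
    (r • 1 - c • M).PosDef := by
  rcases le_or_gt c 0 with hc | hc
  · have : r • 1 - c • M = r • (1 : Matrix n n 𝕜) + (-c) • M := by
      rw [neg_smul, sub_eq_add_neg]
    rw [this]
    exact (PosDef.one.smul hr).add_posSemidef (hM.smul (neg_nonneg.mpr hc))
  · have : r • 1 - c • M = (r - c * L) • (1 : Matrix n n 𝕜) + c • (L • 1 - M) := by
      rw [smul_sub, smul_smul, sub_smul]
      abel
    rw [this]
    exact (PosDef.one.smul (sub_pos.mpr hcL)).add_posSemidef (hML.smul hc.le)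

theorem PosDef.fromBlocks_of_schur₂₂ [Fintype m] [Fintype n] [DecidableEq m] {A : Matrix m m 𝕜}
    (B : Matrix m n 𝕜) {D : Matrix n n 𝕜} (hD : D.PosDef) [Invertible D]
    (hS : (A - B * D⁻¹ * Bᴴ).PosDef) :
    (fromBlocks A B Bᴴ D).PosDef := by
  refine ((PosDef.fromBlocks₂₂ A B hD).mpr hS.posSemidef).posDef_iff_det_ne_zero.mpr ?_
  rw [det_fromBlocks₂₂, invOf_eq_nonsing_inv]
  exact mul_ne_zero hD.det_pos.ne' hS.det_pos.ne'

theorem PosDef.fromBlocks_transpose_smul_one [Fintype m] [Fintype n] [DecidableEq m]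
    {P : Matrix n n ℝ} (A : Matrix m n ℝ) {s : ℝ} (hs : 0 < s)
    (hS : (P - s⁻¹ • (Aᵀ * A)).PosDef) :
    (fromBlocks P Aᵀ A (s • 1)).PosDef := by
  have hinv : (s • 1 : Matrix m m ℝ) * s⁻¹ • 1 = 1 := by simp [hs.ne']
  let := invertibleOfRightInverse _ _ hinv
  have hschur := PosDef.fromBlocks_of_schur₂₂ (A := P) Aᵀ (PosDef.one.smul hs)
  rw [inv_eq_right_inv hinv, conjTranspose_eq_transpose_of_trivial, transpose_transpose,
    Matrix.mul_smul, Matrix.mul_one, Matrix.smul_mul] at hschur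
  exact hschur hS

end Matrix

theorem stmt_5_general (n m : ℕ)
    (A : Matrix (Fin m) (Fin n) ℝ) (r s α : ℝ) (hr : 0 < r) (hs : 0 < s)
    (hA : (Aᵀ * A).IsHermitian)
    (hrs : (1 - α + α ^ 2) * (⨆ i, hA.eigenvalues i) < r * s)
    (H G : Matrix (Fin n ⊕ Fin m) (Fin n ⊕ Fin m) ℝ)
    (hH : H = Matrix.fromBlocks (r • 1 + ((1 - α) / s) • (Aᵀ * A)) Aᵀ A (s • 1))
    (hG : G = Matrix.fromBlocks (r • 1 + ((α * (1 - α)) / s) • (Aᵀ * A)) Aᵀ A (s • 1)) :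
    H.PosDef ∧ G.PosDef := by
  subst hH hG
  set L := ⨆ i, hA.eigenvalues i
  have hAA : (Aᵀ * A).PosSemidef := posSemidef_conjTranspose_mul_self A
  have hL : ∀ i, hA.eigenvalues i ≤ L := le_ciSup (Set.finite_range _).bddAbove
  have hL0 : 0 ≤ L := Real.iSup_nonneg hAA.eigenvalues_nonneg
  have hAAL := hA.posSemidef_smul_one_sub_of_eigenvalues_le hL
  have hαL : α * L ≤ (1 - α + α ^ 2) * L := by linarith [mul_nonneg (sq_nonneg (1 - α)) hL0]
  have hblock : ∀ d : ℝ, (1 - d) * L < r * s →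
      (fromBlocks (r • 1 + (d / s) • (Aᵀ * A)) Aᵀ A (s • 1)).PosDef := by
    intro d hd
    refine PosDef.fromBlocks_transpose_smul_one A hs ?_
    have : r • 1 + (d / s) • (Aᵀ * A) - s⁻¹ • (Aᵀ * A) = r • 1 - ((1 - d) / s) • (Aᵀ * A) := by
      match_scalars <;> ring
    rw [this]
    refine hAA.posDef_smul_one_sub_smul hAAL hr ?_
    rwa [div_mul_eq_mul_div, div_lt_iff₀ hs]
  exact ⟨hblock _ (by linarith), hblock _ (by linarith)⟩

theorem stmt_5 (n m : ℕ) (hn : 0 < n) (hm : 0 < m)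
    (A : Matrix (Fin m) (Fin n) ℝ) (r s α : ℝ) (hr : 0 < r) (hs : 0 < s)
    (hA : (Aᵀ * A).IsHermitian)
    (hrs : (1 - α + α ^ 2) * (⨆ i, hA.eigenvalues i) < r * s)
    (H G : Matrix (Fin n ⊕ Fin m) (Fin n ⊕ Fin m) ℝ)
    (hH : H = Matrix.fromBlocks (r • 1 + ((1 - α) / s) • (Aᵀ * A)) Aᵀ A (s • 1))
    (hG : G = Matrix.fromBlocks (r • 1 + ((α * (1 - α)) / s) • (Aᵀ * A)) Aᵀ A (s • 1)) :
    H.PosDef ∧ G.PosDef :=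
  stmt_5_general n m A r s α hr hs hA hrs H G hH hG
end

section
/- (Prediction lemma) Let uᵏ = (xᵏ, yᵏ) ∈ ℝⁿ × ℝᵐ and let ũᵏ = (x̃ᵏ, ỹᵏ) be a prediction from uᵏ. Then ũᵏ ∈ Ω and for every u = (x, y) ∈ Ω, θ(u) − θ(ũᵏ) + (u − ũᵏ)ᵀF(ũᵏ) ≥ (u − ũᵏ)ᵀ Q (uᵏ − ũᵏ). -/
open Matrix

noncomputable section

/-- A primal-dual pair `(x, y) ∈ ℝⁿ × ℝᵐ`. -/
abbrev PDVec (n m : ℕ) := (Fin n → ℝ) × (Fin m → ℝ)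

/-- View a primal-dual pair as a single vector indexed by `Fin n ⊕ Fin m`. -/
def pdToVec {n m : ℕ} (u : PDVec n m) : Fin n ⊕ Fin m → ℝ := Sum.elim u.1 u.2

/-- `θ(u) = f(x) + g(y)`. -/
def pdTheta {n m : ℕ} (f : (Fin n → ℝ) → ℝ) (g : (Fin m → ℝ) → ℝ) (u : PDVec n m) : ℝ :=
  f u.1 + g u.2

/-- `F(u) = (−Aᵀy, Ax)`. -/
def pdF {n m : ℕ} (A : Matrix (Fin m) (Fin n) ℝ) (u : PDVec n m) : PDVec n m :=
  (-(Aᵀ.mulVec u.2), A.mulVec u.1)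

/-- `Q = [[r·Iₙ, Aᵀ], [α·A, s·Iₘ]]`. -/
def pdQ {n m : ℕ} (A : Matrix (Fin m) (Fin n) ℝ) (r s α : ℝ) :
    Matrix (Fin n ⊕ Fin m) (Fin n ⊕ Fin m) ℝ :=
  Matrix.fromBlocks (r • 1) Aᵀ (α • A) (s • 1)

/-- `M = [[Iₙ, 0], [−((1−α)/s)·A, Iₘ]]`. -/
def pdM {n m : ℕ} (A : Matrix (Fin m) (Fin n) ℝ) (s α : ℝ) :
    Matrix (Fin n ⊕ Fin m) (Fin n ⊕ Fin m) ℝ :=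
  Matrix.fromBlocks 1 0 (-(((1 - α) / s) • A)) 1

/-- `H = [[r·Iₙ + ((1−α)/s)·AᵀA, Aᵀ], [A, s·Iₘ]]`. -/
def pdH {n m : ℕ} (A : Matrix (Fin m) (Fin n) ℝ) (r s α : ℝ) :
    Matrix (Fin n ⊕ Fin m) (Fin n ⊕ Fin m) ℝ :=
  Matrix.fromBlocks (r • 1 + ((1 - α) / s) • (Aᵀ * A)) Aᵀ A (s • 1)

/-- `G = [[r·Iₙ + (α(1−α)/s)·AᵀA, Aᵀ], [A, s·Iₘ]]`. -/
def pdG {n m : ℕ} (A : Matrix (Fin m) (Fin n) ℝ) (r s α : ℝ) :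
    Matrix (Fin n ⊕ Fin m) (Fin n ⊕ Fin m) ℝ :=
  Matrix.fromBlocks (r • 1 + ((α * (1 - α)) / s) • (Aᵀ * A)) Aᵀ A (s • 1)

/-- `‖v‖²_S = vᵀ S v`. -/
def pdNormSq {k : Type*} [Fintype k] (S : Matrix k k ℝ) (v : k → ℝ) : ℝ :=
  v ⬝ᵥ S.mulVec v

/-- `ut` is a prediction from `uk`: its first component minimizes
`x ↦ f(x) − (yᵏ)ᵀAx + (r/2)‖x − xᵏ‖²` over `X`, and its second component minimizes
`y ↦ g(y) + yᵀA(x̃ᵏ + α(x̃ᵏ − xᵏ)) + (s/2)‖y − yᵏ‖²` over `Y`. -/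
def IsPrediction {n m : ℕ} (X : Set (Fin n → ℝ)) (Y : Set (Fin m → ℝ))
    (f : (Fin n → ℝ) → ℝ) (g : (Fin m → ℝ) → ℝ)
    (A : Matrix (Fin m) (Fin n) ℝ) (r s α : ℝ) (uk ut : PDVec n m) : Prop :=
  ut.1 ∈ X ∧
  (∀ x ∈ X,
      f ut.1 - uk.2 ⬝ᵥ A.mulVec ut.1 + r / 2 * ((ut.1 - uk.1) ⬝ᵥ (ut.1 - uk.1)) ≤
        f x - uk.2 ⬝ᵥ A.mulVec x + r / 2 * ((x - uk.1) ⬝ᵥ (x - uk.1))) ∧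
  ut.2 ∈ Y ∧
  (∀ y ∈ Y,
      g ut.2 + ut.2 ⬝ᵥ A.mulVec (ut.1 + α • (ut.1 - uk.1)) +
          s / 2 * ((ut.2 - uk.2) ⬝ᵥ (ut.2 - uk.2)) ≤
        g y + y ⬝ᵥ A.mulVec (ut.1 + α • (ut.1 - uk.1)) +
          s / 2 * ((y - uk.2) ⬝ᵥ (y - uk.2)))

/-- The solution set `Ω*` of the variational inequality `VI(Ω, F, θ)`. -/
def VISol {n m : ℕ} (X : Set (Fin n → ℝ)) (Y : Set (Fin m → ℝ))
    (f : (Fin n → ℝ) → ℝ) (g : (Fin m → ℝ) → ℝ)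
    (A : Matrix (Fin m) (Fin n) ℝ) : Set (PDVec n m) :=
  {u | u.1 ∈ X ∧ u.2 ∈ Y ∧
    ∀ v : PDVec n m, v.1 ∈ X → v.2 ∈ Y →
      pdTheta f g v - pdTheta f g u + (pdToVec v - pdToVec u) ⬝ᵥ pdToVec (pdF A u) ≥ 0}

/-! Each block of the prediction minimizes a convex function plus a linear term plus
`(ρ/2)‖· − x₀‖²` over a convex set. Comparing the objective at the minimizer `xt` with its value at
`xt + t(x − xt)` and letting `t → 0⁺` gives the first-order optimality condition
`φ x − φ xt + (x − xt)ᵀ(b + ρ(xt − x₀)) ≥ 0`. For the `x`-block `b = −Aᵀyᵏ`, for the `y`-block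
`b = A(x̃ᵏ + α(x̃ᵏ − xᵏ))`, and the sum of the two conditions is the claimed inequality, `Q` being
exactly the matrix collecting the proximal and coupling terms. -/
open Filter Topology

lemma nonneg_of_forall_mul_add_sq_mul_nonneg {c d : ℝ}
    (h : ∀ t : ℝ, 0 < t → t ≤ 1 → 0 ≤ t * c + t ^ 2 * d) : 0 ≤ c := by
  have hlim : Tendsto (fun t : ℝ => c + t * d) (𝓝[>] 0) (𝓝 c) :=
    ((continuous_const.add (continuous_id.mul continuous_const)).tendsto' 0 c (by simp)).mono_left
      nhdsWithin_le_nhds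
  refine ge_of_tendsto hlim ?_
  filter_upwards [Ioc_mem_nhdsGT one_pos] with t ⟨ht0, ht1⟩
  have hprod : 0 ≤ t * (c + t * d) := by linarith [h t ht0 ht1]
  exact (mul_nonneg_iff_of_pos_left ht0).mp hprod

section ProxOptimality

variable {ι : Type*} [Fintype ι]

lemma add_dotProduct_add_self (v w : ι → ℝ) :
    (v + w) ⬝ᵥ (v + w) = v ⬝ᵥ v + 2 * (w ⬝ᵥ v) + w ⬝ᵥ w := by
  rw [dotProduct_add, add_dotProduct, add_dotProduct, dotProduct_comm v w]
  ring

lemma prox_quadratic_along_segment (b x₀ xt x : ι → ℝ) (ρ t : ℝ) :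
    b ⬝ᵥ (xt + t • (x - xt)) + ρ / 2 * ((xt + t • (x - xt) - x₀) ⬝ᵥ (xt + t • (x - xt) - x₀)) =
      b ⬝ᵥ xt + ρ / 2 * ((xt - x₀) ⬝ᵥ (xt - x₀)) +
        t * ((x - xt) ⬝ᵥ (b + ρ • (xt - x₀))) + t ^ 2 * (ρ / 2 * ((x - xt) ⬝ᵥ (x - xt))) := by
  rw [show xt + t • (x - xt) - x₀ = (xt - x₀) + t • (x - xt) by abel, add_dotProduct_add_self]
  simp only [dotProduct_add, dotProduct_smul, smul_dotProduct, smul_eq_mul,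
    dotProduct_comm b (x - xt)]
  ring

theorem ConvexOn.optimality_of_isMinOn_add_prox {C : Set (ι → ℝ)} {φ : (ι → ℝ) → ℝ}
    (hφ : ConvexOn ℝ C φ) {b x₀ xt : ι → ℝ} {ρ : ℝ} (hxt : xt ∈ C)
    (hmin : IsMinOn (fun x => φ x + b ⬝ᵥ x + ρ / 2 * ((x - x₀) ⬝ᵥ (x - x₀))) C xt)
    {x : ι → ℝ} (hx : x ∈ C) :
    0 ≤ φ x - φ xt + (x - xt) ⬝ᵥ (b + ρ • (xt - x₀)) := by
  refine nonneg_of_forall_mul_add_sq_mul_nonneg (d := ρ / 2 * ((x - xt) ⬝ᵥ (x - xt))) ?_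
  intro t ht0 ht1
  have hseg : (1 - t) • xt + t • x = xt + t • (x - xt) := by
    simp only [sub_smul, one_smul, smul_sub]; abel
  have h1t : 0 ≤ 1 - t := by linarith
  have hconv : φ (xt + t • (x - xt)) ≤ (1 - t) * φ xt + t * φ x := by
    simpa only [hseg, smul_eq_mul] using hφ.2 hxt hx h1t ht0.le (sub_add_cancel 1 t)
  have hmem : xt + t • (x - xt) ∈ C := hseg ▸ hφ.1 hxt hx h1t ht0.le (sub_add_cancel 1 t)
  have hle := isMinOn_iff.mp hmin _ hmem
  have hquad := prox_quadratic_along_segment b x₀ xt x ρ t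
  linarith

end ProxOptimality

section PrimalDual

variable {n m : ℕ}

lemma pdToVec_sub (u v : PDVec n m) : pdToVec u - pdToVec v = pdToVec (u - v) := by
  ext (i | i) <;> rfl

lemma pdToVec_dotProduct (u v : PDVec n m) :
    pdToVec u ⬝ᵥ pdToVec v = u.1 ⬝ᵥ v.1 + u.2 ⬝ᵥ v.2 :=
  sumElim_dotProduct_sumElim _ _ _ _

lemma pdQ_mulVec_pdToVec (A : Matrix (Fin m) (Fin n) ℝ) (r s α : ℝ) (u : PDVec n m) :
    (pdQ A r s α) *ᵥ pdToVec u = pdToVec (r • u.1 + Aᵀ *ᵥ u.2, α • (A *ᵥ u.1) + s • u.2) := by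
  simp only [pdQ, pdToVec, fromBlocks_mulVec, smul_mulVec, one_mulVec, Sum.elim_comp_inl,
    Sum.elim_comp_inr]

end PrimalDual

theorem stmt_6_general (n m : ℕ)
    (X : Set (Fin n → ℝ)) (Y : Set (Fin m → ℝ))
    (hXcv : Convex ℝ X) (hYcv : Convex ℝ Y)
    (f : (Fin n → ℝ) → ℝ) (g : (Fin m → ℝ) → ℝ)
    (hf : ConvexOn ℝ Set.univ f) (hg : ConvexOn ℝ Set.univ g)
    (A : Matrix (Fin m) (Fin n) ℝ) (r s α : ℝ)
    (uk ut : PDVec n m)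
    (hpred : IsPrediction X Y f g A r s α uk ut) :
    ut.1 ∈ X ∧ ut.2 ∈ Y ∧
      ∀ u : PDVec n m, u.1 ∈ X → u.2 ∈ Y →
        pdTheta f g u - pdTheta f g ut +
            (pdToVec u - pdToVec ut) ⬝ᵥ pdToVec (pdF A ut) ≥
          (pdToVec u - pdToVec ut) ⬝ᵥ (pdQ A r s α).mulVec (pdToVec uk - pdToVec ut) := by
  obtain ⟨hxt, hxmin, hyt, hymin⟩ := hpred
  refine ⟨hxt, hyt, fun u hx hy => ?_⟩
  have hx_opt := (hf.subset (Set.subset_univ X) hXcv).optimality_of_isMinOn_add_prox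
    (b := -(Aᵀ *ᵥ uk.2)) (x₀ := uk.1) (ρ := r) hxt (isMinOn_iff.mpr fun x hx => by
      simpa only [neg_dotProduct, mulVec_transpose, dotProduct_mulVec, sub_eq_add_neg]
        using hxmin x hx) hx
  have hy_opt := (hg.subset (Set.subset_univ Y) hYcv).optimality_of_isMinOn_add_prox
    (b := A *ᵥ (ut.1 + α • (ut.1 - uk.1))) (x₀ := uk.2) (ρ := s) hyt
    (isMinOn_iff.mpr fun y hy => by
      simpa only [dotProduct_comm (A *ᵥ _)] using hymin y hy) hy
  rw [ge_iff_le, pdToVec_sub, pdToVec_sub, pdQ_mulVec_pdToVec, pdToVec_dotProduct,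
    pdToVec_dotProduct]
  simp only [pdTheta, pdF, Prod.fst_sub, Prod.snd_sub, dotProduct_add, dotProduct_neg,
    dotProduct_sub, dotProduct_smul, mulVec_add, mulVec_smul, mulVec_sub, smul_sub]
    at hx_opt hy_opt ⊢
  linarith

/-- Prediction lemma: the predictor satisfies the variational characterization (3.10). -/
theorem stmt_6 (n m : ℕ) (hn : 0 < n) (hm : 0 < m)
    (X : Set (Fin n → ℝ)) (Y : Set (Fin m → ℝ))
    (hXne : X.Nonempty) (hXcl : IsClosed X) (hXcv : Convex ℝ X)
    (hYne : Y.Nonempty) (hYcl : IsClosed Y) (hYcv : Convex ℝ Y)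
    (f : (Fin n → ℝ) → ℝ) (g : (Fin m → ℝ) → ℝ)
    (hf : ConvexOn ℝ Set.univ f) (hg : ConvexOn ℝ Set.univ g)
    (A : Matrix (Fin m) (Fin n) ℝ) (r s α : ℝ) (hr : 0 < r) (hs : 0 < s)
    (uk ut : PDVec n m)
    (hpred : IsPrediction X Y f g A r s α uk ut) :
    ut.1 ∈ X ∧ ut.2 ∈ Y ∧
      ∀ u : PDVec n m, u.1 ∈ X → u.2 ∈ Y →
        pdTheta f g u - pdTheta f g ut +
            (pdToVec u - pdToVec ut) ⬝ᵥ pdToVec (pdF A ut) ≥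
          (pdToVec u - pdToVec ut) ⬝ᵥ (pdQ A r s α).mulVec (pdToVec uk - pdToVec ut) :=
  stmt_6_general n m X Y hXcv hYcv f g hf hg A r s α uk ut hpred
end
end
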